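/- arXiv:2407.07951 — 4 statements merged into one kernel-verified Lean document; each statement's English description precedes it below -/
import Mathlib

section
/- Let l > 1 and let i_1, ..., i_l be positive integers with sum equal to k, where k is a power of 2. Let j be a sum of distinct powers of 2, each strictly larger than k. Then the product over s = 1 to l of the binomial coefficients C(j - 1 + i_1 + ... + i_{s-1}, i_s) is even. -/
/-- If some binary digit of `k` is set where the corresponding digit of `n` is not,
then `n.choose k` is even. -/
lemma even_choose_of_testBit : ∀ (p n k : ℕ), n.testBit p = false → k.testBit p = true →
    Nat.choose n k % 2 = 0 := by
  intro p
  induction p with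
  | zero =>
    intro n k hn hk
    have h := @Choose.choose_modEq_choose_mod_mul_choose_div_nat n k 2 ⟨Nat.prime_two⟩
    rw [Nat.ModEq] at h
    simp only [Nat.testBit_zero, decide_eq_false_iff_not, decide_eq_true_eq] at hn hk
    have hn2 : n % 2 = 0 := by omega
    rw [h, hn2, hk]
    simp [Nat.mul_mod]
  | succ p ih =>
    intro n k hn hk
    have h := @Choose.choose_modEq_choose_mod_mul_choose_div_nat n k 2 ⟨Nat.prime_two⟩
    rw [Nat.ModEq] at h
    rw [Nat.testBit_add_one] at hn hk
    have h2 := ih (n / 2) (k / 2) hn hk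
    rw [h, Nat.mul_mod, h2]
    simp

/-- A power of two divides `j` if all low binary digits of `j` vanish. -/
lemma two_pow_dvd_of_testBit (m j : ℕ) (hdig : ∀ p < m, j.testBit p = false) :
    2 ^ m ∣ j := by
  have : j % 2 ^ m = 0 := by
    apply Nat.eq_of_testBit_eq
    intro p
    rw [Nat.testBit_mod_two_pow, Nat.zero_testBit]
    by_cases hp : p < m
    · simp [hp, hdig p hp]
    · simp [hp]
  omega

/-- Let `l > 1` and let `i₁, …, i_l` be positive integers with sum `2^m`, and let
`j > 0` have vanishing binary digits in all positions `≤ m`.  Then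
`∏_{s=1}^{l} C(j - 1 + ∑_{t<s} i_t, i_s)` is even. -/
theorem prod_choose_even (m l : ℕ) (hl : 1 < l) (i : Fin l → ℕ)
    (hpos : ∀ s, 0 < i s) (hsum : ∑ s, i s = 2 ^ m)
    (j : ℕ) (hj : 0 < j) (hdig : ∀ p ≤ m, j.testBit p = false) :
    (∏ s : Fin l,
      Nat.choose (j - 1 + ∑ t ∈ Finset.univ.filter (fun t => t < s), i t) (i s)) % 2 = 0 := by
  -- the last index
  set s₀ : Fin l := ⟨l - 1, by omega⟩ with hs₀
  set a : ℕ := i s₀ with ha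
  -- the set of indices below s₀ is everything except s₀
  have hfilter : Finset.univ.filter (fun t => t < s₀) = Finset.univ.erase s₀ := by
    ext t
    simp only [Finset.mem_filter, Finset.mem_univ, true_and, and_true, Finset.mem_erase,
      Fin.lt_def, hs₀]
    constructor
    · intro h he
      subst he
      simp at h
    · intro hne
      have ht := t.isLt
      have h2 : (t : ℕ) ≠ l - 1 := fun h => hne (Fin.ext h)
      show (t : ℕ) < l - 1
      omega
  set P : ℕ := ∑ t ∈ Finset.univ.filter (fun t => t < s₀), i t with hP
  have hPa : P + a = 2 ^ m := by
    rw [hP, hfilter, ha]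
    rw [add_comm, Finset.add_sum_erase _ i (Finset.mem_univ s₀)]
    exact hsum
  -- P ≥ 1 since the first index is below s₀
  have hs1 : (⟨0, by omega⟩ : Fin l) ∈ Finset.univ.filter (fun t => t < s₀) := by
    simp only [Finset.mem_filter, Finset.mem_univ, true_and, Fin.lt_def, hs₀]
    omega
  have hP1 : 1 ≤ P := le_trans (hpos _) (Finset.single_le_sum (f := i) (fun t _ => Nat.zero_le _) hs1)
  have ha1 : 1 ≤ a := hpos s₀
  have halt : a < 2 ^ m := by omega
  -- pick a set bit of a
  obtain ⟨p, hp, -⟩ := Nat.exists_most_significant_bit (n := a) (by omega)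
  have hpm : p < m := by
    have h1 : 2 ^ p ≤ a := Nat.ge_two_pow_of_testBit hp
    have := Nat.pow_lt_pow_iff_right (a := 2) (by norm_num) (n := p) (m := m)
    omega
  -- 2^m divides j
  have hdvd : 2 ^ m ∣ j := two_pow_dvd_of_testBit m j (fun q hq => hdig q (le_of_lt hq))
  -- rewrite the top of the binomial coefficient
  set q : ℕ := 2 ^ m - (a + 1) with hq
  have htop : j - 1 + P = j + q := by omega
  -- that bit of the top is false
  have hnq : (j + q).testBit p = false := by
    have hqlt : q < 2 ^ m := by omega
    have hmod : (j + q) % 2 ^ m = q := by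
      obtain ⟨c, hc⟩ := hdvd
      rw [hc]
      rw [Nat.add_comm, Nat.add_mul_mod_self_left]
      exact Nat.mod_eq_of_lt hqlt
    have h1 : ((j + q) % 2 ^ m).testBit p = (j + q).testBit p := by
      rw [Nat.testBit_mod_two_pow]
      simp [hpm]
    rw [← h1, hmod, hq, Nat.testBit_two_pow_sub_succ halt]
    simp [hp]
  -- the factor at s₀ is even
  have hfac : Nat.choose (j - 1 + P) a % 2 = 0 := by
    rw [htop]
    exact even_choose_of_testBit p (j + q) a hnq hp
  have hdvd2 : 2 ∣ ∏ s : Fin l,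
      Nat.choose (j - 1 + ∑ t ∈ Finset.univ.filter (fun t => t < s), i t) (i s) := by
    refine dvd_trans ?_ (Finset.dvd_prod_of_mem _ (Finset.mem_univ s₀))
    exact Nat.dvd_of_mod_eq_zero hfac
  omega
end

section
/- For natural numbers j and k with 0 < k < j, where k is a power of 2 and all nonzero binary digits of j occur in positions strictly higher than the position of k's nonzero digit, the binomial coefficient C(j - k - 1, k) is even. -/
/-- If `k = 2^m`, all nonzero binary digits of `j` occur in positions strictly larger
than `m` (so in particular `j` is a sum of powers of `2` bigger than `2^m`), and
`2^m < j`, then `C(j - 2^m - 1, 2^m)` is even. -/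
theorem choose_sub_pow_pred_even (m j : ℕ)
    (hdig : ∀ p ≤ m, j.testBit p = false) (hj : 2 ^ m < j) :
    Nat.choose (j - 2 ^ m - 1) (2 ^ m) % 2 = 0 := by
  haveI : Fact (Nat.Prime 2) := ⟨Nat.prime_two⟩
  set n := j - 2 ^ m - 1 with hn
  set K := 2 ^ m with hK
  have hK1 : 1 ≤ K := Nat.one_le_two_pow
  -- j is divisible by 2^(m+1)
  have hdvd : 2 ^ (m + 1) ∣ j := by
    apply Nat.dvd_of_mod_eq_zero
    apply Nat.zero_of_testBit_eq_false
    intro i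
    rw [Nat.testBit_mod_two_pow]
    by_cases hi : i < m + 1
    · simp [hdig i (Nat.lt_succ_iff.mp hi)]
    · simp [hi]
  obtain ⟨q, hq⟩ := hdvd
  have hq1 : 1 ≤ q := by
    rcases Nat.eq_zero_or_pos q with h | h
    · subst h; simp at hq; omega
    · exact h
  -- compute n = K * (2*(q-1)) + (K - 1)
  have hj' : j = 2 * (K * q) := by rw [hq, hK, pow_succ]; ring
  have hKq : K ≤ K * q := Nat.le_mul_of_pos_right K hq1
  have e1 : K * (2 * (q - 1)) = 2 * (K * q) - 2 * K := by
    obtain ⟨r, rfl⟩ : ∃ r, q = r + 1 := ⟨q - 1, by omega⟩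
    simp [Nat.add_sub_cancel, Nat.mul_add]
    ring
  have hnn : n = K * (2 * (q - 1)) + (K - 1) := by
    rw [hn, hj']
    omega
  have hdiv : n / K % 2 = 0 := by
    rw [hnn, Nat.mul_add_div (by omega), Nat.div_eq_of_lt (by omega)]
    omega
  -- Lucas
  have hlucas := Choose.choose_modEq_choose_mul_prod_range_choose
    (n := n) (k := K) (p := 2) (m + 1)
  have hfac : ∏ i ∈ Finset.range (m + 1),
      Nat.choose (n / 2 ^ i % 2) (K / 2 ^ i % 2) = 0 := by
    apply Finset.prod_eq_zero (Finset.self_mem_range_succ m)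
    rw [← hK, hdiv, hK, Nat.div_self (by positivity)]
    rfl
  rw [hfac] at hlucas
  simp only [Nat.cast_zero, mul_zero] at hlucas
  have h2 : (2 : ℤ) ∣ (Nat.choose n K : ℤ) := Int.modEq_zero_iff_dvd.mp hlucas
  have : 2 ∣ Nat.choose n K := by exact_mod_cast h2
  omega
end

section
/- For positive integers i_1, ..., i_l (l > 1) summing to 2^m, consider the partial sums S_0 = 0, S_s = i_1 + ... + i_s. Let p be the least position such that some binary digit at position p changes along the sequence M_s = j - 1 + S_{s-1} (where j - 1 ≡ 2^{m+1} - 1 pattern in low digits, i.e., digits 0..m of j-1 are all 1). Then there exist indices s < s' such that digit p of M_{s} is 1, digit p of M_{s+1} through M_{s'} is 0, and digit p of i_{s'} is 1 while digit p of M_{s'} is 0; hence C(M_{s'}, i_{s'}) is even. -/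
/-- If bit `q` of `n` is `0` but bit `q` of `k` is `1`, then `C(n,k)` is even
(a consequence of Lucas's theorem). -/
lemma choose_even_of_testBit (n k q : ℕ) (hn : n.testBit q = false)
    (hk : k.testBit q = true) : n.choose k % 2 = 0 := by
  haveI : Fact (Nat.Prime 2) := ⟨Nat.prime_two⟩
  have H := @Choose.choose_modEq_choose_mul_prod_range_choose n k 2 _ (q + 1)
  rw [Nat.testBit_eq_decide_div_mod_eq] at hn hk
  simp only [decide_eq_false_iff_not, decide_eq_true_eq] at hn hk
  have h0 : n / 2 ^ q % 2 = 0 := by omega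
  have hprod : (∏ x ∈ Finset.range (q + 1),
      Nat.choose (n / 2 ^ x % 2) (k / 2 ^ x % 2)) = 0 := by
    apply Finset.prod_eq_zero (Finset.self_mem_range_succ q)
    rw [h0, hk]
    rfl
  rw [hprod] at H
  simp only [Nat.cast_zero, mul_zero, Int.ModEq, Int.zero_emod] at H
  omega

/-- Let `l > 1`, let `i₁, …, i_l` be positive integers summing to `2^m`, and let
`j > 0` be divisible by `2^(m+1)`.  Let `p` be the least binary-digit position that
occurs as a nonzero digit of some `i_s` (so `p` is the least position at which the
sequence `M_s = j - 1 + ∑_{t<s} i_t` changes).  Then there is an index `s'` such that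
the `p`-th digit of `M_{s'}` is `0` while the `p`-th digit of `i_{s'}` is `1`, whence
by Lucas's theorem `C(M_{s'}, i_{s'})` is even. -/
theorem exists_even_choose_in_sequence (m l : ℕ) (hl : 1 < l) (i : Fin l → ℕ)
    (hpos : ∀ s, 0 < i s) (hsum : ∑ s, i s = 2 ^ m)
    (j : ℕ) (hj : 0 < j) (hdvd : 2 ^ (m + 1) ∣ j)
    (p : ℕ) (hp_ex : ∃ s, (i s).testBit p = true)
    (hp_min : ∀ q < p, ∀ s, (i s).testBit q = false) :
    ∃ s' : Fin l,
      (j - 1 + ∑ t ∈ Finset.univ.filter (fun t => t < s'), i t).testBit p = false ∧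
      (i s').testBit p = true ∧
      Nat.choose (j - 1 + ∑ t ∈ Finset.univ.filter (fun t => t < s'), i t) (i s') % 2 = 0 := by
  classical
  -- each i s is divisible by 2^p
  have hdvd2 : ∀ s, 2 ^ p ∣ i s := by
    intro s
    have : i s % 2 ^ p = 0 := by
      apply Nat.zero_of_testBit_eq_false
      intro q
      rw [Nat.testBit_mod_two_pow]
      by_cases h : q < p
      · simp [hp_min q h s]
      · simp [h]
    omega
  set a : Fin l → ℕ := fun s => i s / 2 ^ p with ha
  have hia : ∀ s, i s = 2 ^ p * a s := fun s => (Nat.mul_div_cancel' (hdvd2 s)).symm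
  have hbit : ∀ s, (i s).testBit p = decide (a s % 2 = 1) := by
    intro s
    rw [Nat.testBit_eq_decide_div_mod_eq]
  -- p < m
  have hpm : p < m := by
    obtain ⟨s0, hs0⟩ := hp_ex
    have h1 : 2 ^ p ≤ i s0 := by
      by_contra h
      rw [Nat.testBit_eq_false_of_lt (by omega)] at hs0
      exact Bool.false_ne_true hs0
    -- there is another positive term
    obtain ⟨s1, hs1⟩ : ∃ s1 : Fin l, s1 ≠ s0 := by
      haveI : Nontrivial (Fin l) := Fin.nontrivial_iff_two_le.mpr hl
      exact exists_ne s0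
    have h2 : i s0 + i s1 ≤ 2 ^ m := by
      rw [← hsum]
      have := Finset.add_sum_erase Finset.univ i (Finset.mem_univ s0)
      calc i s0 + i s1 ≤ i s0 + ∑ t ∈ Finset.univ.erase s0, i t := by
            exact Nat.add_le_add_left (Finset.single_le_sum (fun t _ => Nat.zero_le _)
              (Finset.mem_erase.mpr ⟨hs1, Finset.mem_univ s1⟩)) _
        _ = ∑ t, i t := this
    have h3 : 2 ^ p < 2 ^ m := lt_of_le_of_lt h1 (by have := hpos s1; omega)
    exact (Nat.pow_lt_pow_iff_right (by norm_num)).mp h3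
  -- sum of a's
  have hsuma : ∑ s, a s = 2 ^ (m - p) := by
    have : 2 ^ p * ∑ s, a s = 2 ^ p * 2 ^ (m - p) := by
      rw [Finset.mul_sum, ← Nat.pow_add]
      rw [show p + (m - p) = m by omega, ← hsum]
      exact Finset.sum_congr rfl fun s _ => (hia s).symm
    exact Nat.eq_of_mul_eq_mul_left (Nat.two_pow_pos p) this
  -- the set F of indices with odd a
  set F : Finset (Fin l) := Finset.univ.filter (fun s => (i s).testBit p = true) with hF
  have hmemF : ∀ s, s ∈ F ↔ a s % 2 = 1 := by
    intro s
    rw [hF, Finset.mem_filter, hbit s]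
    simp
  have hFne : F.Nonempty := by
    obtain ⟨s0, hs0⟩ := hp_ex
    exact ⟨s0, by rw [hF, Finset.mem_filter]; exact ⟨Finset.mem_univ _, hs0⟩⟩
  -- F.card is even
  have hcard : F.card % 2 = 0 := by
    have h1 : (∑ s, a s) % 2 = 0 := by
      rw [hsuma]
      have : 0 < m - p := by omega
      have : 2 ∣ 2 ^ (m - p) := dvd_pow_self 2 (by omega)
      omega
    have h2 : (∑ s, a s) % 2 = F.card % 2 := by
      rw [Finset.sum_nat_mod]
      congr 1
      rw [hF]
      have : ∑ s, a s % 2 = ∑ s : Fin l, (if (i s).testBit p = true then 1 else 0) := by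
        apply Finset.sum_congr rfl
        intro s _
        rw [hbit s]
        by_cases h : a s % 2 = 1 <;> simp [h] <;> omega
      rw [this, ← Finset.card_filter]
    omega
  have hF2 : 2 ≤ F.card := by
    have := Finset.card_pos.mpr hFne
    omega
  -- first and second elements of F
  set s0 := F.min' hFne with hs0def
  have hs0F : s0 ∈ F := F.min'_mem hFne
  have hF'ne : (F.erase s0).Nonempty := by
    rw [← Finset.card_pos, Finset.card_erase_of_mem hs0F]
    omega
  set s' := (F.erase s0).min' hF'ne with hs'def
  have hs'F' : s' ∈ F.erase s0 := Finset.min'_mem _ hF'ne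
  have hs'F : s' ∈ F := Finset.mem_of_mem_erase hs'F'
  have hs0s' : s0 < s' :=
    lt_of_le_of_ne (F.min'_le s' hs'F) (Ne.symm (Finset.ne_of_mem_erase hs'F'))
  -- indices t < s' that lie in F: exactly s0
  have hfilter : (Finset.univ.filter (fun t => t < s')).filter
      (fun t => (i t).testBit p = true) = {s0} := by
    ext t
    simp only [Finset.mem_filter, Finset.mem_univ, true_and, Finset.mem_singleton]
    constructor
    · rintro ⟨hts', htF⟩
      by_contra hne
      have : t ∈ F.erase s0 := Finset.mem_erase.mpr ⟨hne, by
        rw [hF, Finset.mem_filter]; exact ⟨Finset.mem_univ _, htF⟩⟩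
      have := Finset.min'_le _ t this
      rw [← hs'def] at this
      exact absurd hts' (not_lt.mpr this)
    · rintro rfl
      refine ⟨hs0s', ?_⟩
      rw [hF, Finset.mem_filter] at hs0F
      exact hs0F.2
  -- A = sum of a over t < s' is odd
  set A := ∑ t ∈ Finset.univ.filter (fun t => t < s'), a t with hAdef
  have hA2 : A % 2 = 1 := by
    rw [hAdef, Finset.sum_nat_mod]
    have : ∑ t ∈ Finset.univ.filter (fun t => t < s'), a t % 2
        = ∑ t ∈ Finset.univ.filter (fun t => t < s'),
            (if (i t).testBit p = true then 1 else 0) := by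
      apply Finset.sum_congr rfl
      intro t _
      rw [hbit t]
      by_cases h : a t % 2 = 1 <;> simp [h] <;> omega
    rw [this, ← Finset.card_filter, hfilter]
    rfl
  have hA1 : 1 ≤ A := by omega
  -- the partial sum equals 2^p * A
  have hS : ∑ t ∈ Finset.univ.filter (fun t => t < s'), i t = 2 ^ p * A := by
    rw [hAdef, Finset.mul_sum]
    exact Finset.sum_congr rfl fun t _ => hia t
  -- write j = 2^(m+1) * c
  obtain ⟨c, hc⟩ := hdvd
  have hc1 : 1 ≤ c := by
    rcases Nat.eq_zero_or_pos c with h | h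
    · subst h; simp at hc; omega
    · exact h
  -- key decomposition of M
  have hpow : 2 ^ (m + 1) = 2 ^ p * (2 * 2 ^ (m - p)) := by
    rw [← Nat.pow_succ', ← Nat.pow_add]
    congr 1
    omega
  set K := 2 * 2 ^ (m - p) * c + (A - 1) with hKdef
  have key : j - 1 + ∑ t ∈ Finset.univ.filter (fun t => t < s'), i t
      = 2 ^ p * K + (2 ^ p - 1) := by
    rw [hS]
    have hj1 : 1 ≤ j := hj
    have h2p : 1 ≤ 2 ^ p := Nat.one_le_two_pow
    zify [hj1, hA1, h2p]
    rw [hc, hpow, hKdef]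
    push_cast [hA1]
    ring
  -- M's bit p is false
  have hMbit : (j - 1 + ∑ t ∈ Finset.univ.filter (fun t => t < s'), i t).testBit p
      = false := by
    rw [key, Nat.testBit_eq_decide_div_mod_eq]
    have hdiv : (2 ^ p * K + (2 ^ p - 1)) / 2 ^ p = K := by
      rw [Nat.mul_add_div (Nat.two_pow_pos p)]
      rw [Nat.div_eq_of_lt (by have := Nat.one_le_two_pow (n := p); omega)]
      omega
    rw [hdiv]
    have : K % 2 = 0 := by
      have h2 : K = 2 * (2 ^ (m - p) * c) + (A - 1) := by rw [hKdef]; ring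
      omega
    simp [this]
  refine ⟨s', hMbit, ?_, ?_⟩
  · rw [hF, Finset.mem_filter] at hs'F
    exact hs'F.2
  · apply choose_even_of_testBit _ _ p hMbit
    rw [hF, Finset.mem_filter] at hs'F
    exact hs'F.2
end

section
/- If two F_2 Laurent-polynomial matrices B and W of compatible sizes satisfy B (W + W^†) B^† = 0 and B^† (W̃ + W̃^†) B = 0, and M is the 4R × 4R block matrix [[1, W^†B^†, 0, W^†B^†W̃],[W̃^†B, 1, W̃^†BW, 0],[0, B^†, 1, B^†W̃],[B, 0, BW, 1]], then M^† λ M = λ, where λ = [[0,0,1,0],[0,0,0,1],[1,0,0,0],[0,1,0,0]] (in R × R blocks). -/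
open Matrix

/-- The Laurent polynomial ring `F₂[x₁^{±1}, …, x_d^{±1}]`, realized as the group
algebra of `ℤ^d` over `F₂`. -/
abbrev LaurentF2 (d : ℕ) : Type := AddMonoidAlgebra (ZMod 2) (Fin d →₀ ℤ)

/-- The involution of `LaurentF2 d` sending each variable `xᵢ` to `xᵢ⁻¹`. -/
noncomputable def laurentInv (d : ℕ) : LaurentF2 d ≃ₐ[ZMod 2] LaurentF2 d :=
  AddMonoidAlgebra.domCongr (ZMod 2) (ZMod 2) (AddEquiv.neg (Fin d →₀ ℤ))

/-- `M† = (M.map (xᵢ ↦ xᵢ⁻¹))ᵀ` for matrices over the Laurent polynomial ring. -/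
noncomputable def mdag {d : ℕ} {ι κ : Type*}
    (M : Matrix ι κ (LaurentF2 d)) : Matrix κ ι (LaurentF2 d) :=
  (M.map (laurentInv d))ᵀ

lemma lf2_add_self {d : ℕ} (a : LaurentF2 d) : a + a = 0 := by
  have h : ((2 : ZMod 2) • a) = a + a := two_smul _ a
  rw [← h, show (2 : ZMod 2) = 0 from rfl, zero_smul]

lemma mat_add_self {d : ℕ} {ι κ : Type*} (A : Matrix ι κ (LaurentF2 d)) : A + A = 0 := by
  exact Matrix.ext fun i j => lf2_add_self (A i j)

lemma mdag_mul {d : ℕ} {ι κ σ : Type*} [Fintype κ]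
    (A : Matrix ι κ (LaurentF2 d)) (C : Matrix κ σ (LaurentF2 d)) :
    mdag (A * C) = mdag C * mdag A := by
  unfold mdag
  rw [show (A * C).map (laurentInv d) = (A * C).map ((laurentInv d : LaurentF2 d →+* LaurentF2 d) : LaurentF2 d → LaurentF2 d) from rfl,
    Matrix.map_mul, transpose_mul]
  rfl

lemma mdag_one {d : ℕ} {ι : Type*} [DecidableEq ι] : mdag (1 : Matrix ι ι (LaurentF2 d)) = 1 := by
  unfold mdag
  rw [Matrix.map_one _ (map_zero _) (map_one _), transpose_one]

lemma mdag_zero {d : ℕ} {ι κ : Type*} : mdag (0 : Matrix ι κ (LaurentF2 d)) = 0 := by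
  unfold mdag
  rw [Matrix.map_zero _ (map_zero _), transpose_zero]

lemma mdag_mdag {d : ℕ} {ι κ : Type*} (A : Matrix ι κ (LaurentF2 d)) : mdag (mdag A) = A := by
  unfold mdag
  refine Matrix.ext fun i j => ?_
  show (laurentInv d) ((laurentInv d) (A i j)) = A i j
  have h : (laurentInv d).symm = laurentInv d := rfl
  conv_rhs => rw [← (laurentInv d).symm_apply_apply (A i j), h]

lemma mdag_fromBlocks {d : ℕ} {ι κ ι' κ' : Type*}
    (A : Matrix ι κ (LaurentF2 d)) (B : Matrix ι κ' (LaurentF2 d))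
    (C : Matrix ι' κ (LaurentF2 d)) (D : Matrix ι' κ' (LaurentF2 d)) :
    mdag (fromBlocks A B C D) = fromBlocks (mdag A) (mdag C) (mdag B) (mdag D) := by
  unfold mdag
  rw [fromBlocks_map, fromBlocks_transpose]

lemma two_nsmul_self {d : ℕ} {ι κ : Type*} (A : Matrix ι κ (LaurentF2 d)) : (2:ℕ) • A = 0 := by
  rw [two_smul]; exact mat_add_self A

/-- If `B(W + W†)B† = 0` and `B†(W̃ + W̃†)B = 0`, then the `4R × 4R` block matrix
`M = [[1, W†B†, 0, W†B†W̃],[W̃†B, 1, W̃†BW, 0],[0, B†, 1, B†W̃],[B, 0, BW, 1]]`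
satisfies the symplectic condition `M† λ M = λ` with
`λ = [[0,0,1,0],[0,0,0,1],[1,0,0,0],[0,1,0,0]]`, i.e. `M` defines a Clifford QCA. -/
theorem walkerWang_qca_symplectic (d R : ℕ)
    (B W Wt : Matrix (Fin R) (Fin R) (LaurentF2 d))
    (hW : B * (W + mdag W) * mdag B = 0)
    (hWt : mdag B * (Wt + mdag Wt) * B = 0) :
    let M : Matrix ((Fin R ⊕ Fin R) ⊕ (Fin R ⊕ Fin R))
        ((Fin R ⊕ Fin R) ⊕ (Fin R ⊕ Fin R)) (LaurentF2 d) :=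
      Matrix.fromBlocks
        (Matrix.fromBlocks 1 (mdag W * mdag B) (mdag Wt * B) 1)
        (Matrix.fromBlocks 0 (mdag W * mdag B * Wt) (mdag Wt * B * W) 0)
        (Matrix.fromBlocks 0 (mdag B) B 0)
        (Matrix.fromBlocks 1 (mdag B * Wt) (B * W) 1)
    let lam : Matrix ((Fin R ⊕ Fin R) ⊕ (Fin R ⊕ Fin R))
        ((Fin R ⊕ Fin R) ⊕ (Fin R ⊕ Fin R)) (LaurentF2 d) :=
      Matrix.fromBlocks 0 1 1 0
    mdag M * lam * M = lam := by
  intro M lam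
  have cancel : ∀ A C : Matrix (Fin R) (Fin R) (LaurentF2 d), A + C = 0 → A = C := by
    intro A C h
    calc A = (A + C) + C := by rw [add_assoc, mat_add_self, add_zero]
    _ = C := by rw [h, zero_add]
  have heqW : B * (W * mdag B) = B * (mdag W * mdag B) := by
    apply cancel
    rw [show B * (W * mdag B) + B * (mdag W * mdag B)
        = B * (W + mdag W) * mdag B by noncomm_ring, hW]
  have heqWt : mdag B * (Wt * B) = mdag B * (mdag Wt * B) := by
    apply cancel
    rw [show mdag B * (Wt * B) + mdag B * (mdag Wt * B)
        = mdag B * (Wt + mdag Wt) * B by noncomm_ring, hWt]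
  have hWX : ∀ X : Matrix (Fin R) (Fin R) (LaurentF2 d),
      B * (W * (mdag B * X)) = B * (mdag W * (mdag B * X)) := by
    intro X
    have := congrArg (· * X) heqW
    simpa [mul_assoc] using this
  have hWtX : ∀ X : Matrix (Fin R) (Fin R) (LaurentF2 d),
      mdag B * (Wt * (B * X)) = mdag B * (mdag Wt * (B * X)) := by
    intro X
    have := congrArg (· * X) heqWt
    simpa [mul_assoc] using this
  show mdag M * lam * M = lam
  simp only [M, lam, mdag_fromBlocks, mdag_mul, mdag_mdag, mdag_one, mdag_zero,
    fromBlocks_multiply, Matrix.one_mul, Matrix.mul_one, Matrix.zero_mul, Matrix.mul_zero,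
    add_zero, zero_add, Matrix.mul_assoc, Matrix.fromBlocks_add, fromBlocks_inj]
  and_intros <;>
    first
    | rfl
    | (simp only [hWX, hWtX, heqW, heqWt]; abel_nf;
       simp [two_nsmul_self, two_mul, two_smul, mat_add_self])
end
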